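/- Suppose at step k of the BFGS method that s_k ≠ 0, τ_k < 1, and ‖Ĥ_k − I‖_F ≤ δ for some δ > 0. Then the BFGS update satisfies ‖Ĥ_{k+1} − I‖_F ≤ ‖Ĥ_k − I‖_F − ‖(Ĥ_k − I)ŷ_k‖²/(2δ‖ŷ_k‖²) + V_k·τ_k, where V_k = ‖Ĥ_k‖·4/(1 − τ_k) + ‖Ĥ_k‖·4(1 + τ_k)²τ_k/(1 − τ_k)² + (3 + 2τ_k)/(1 − τ_k). -/

import Mathlib

noncomputable section

open Matrix Finset

abbrev E (d : ℕ) := EuclideanSpace ℝ (Fin d)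
abbrev Mat (d : ℕ) := Matrix (Fin d) (Fin d) ℝ

/-- Spectral (operator 2-) norm of a real matrix. -/
def spec {d : ℕ} (A : Mat d) : ℝ := ‖Matrix.toEuclideanCLM (𝕜 := ℝ) A‖

/-- Frobenius norm of a real matrix. -/
def frob {d : ℕ} (A : Mat d) : ℝ := Real.sqrt (∑ i, ∑ j, (A i j) ^ 2)

/-- A matrix acting on a Euclidean vector. -/
def mApp {d : ℕ} (A : Mat d) (v : E d) : E d := Matrix.toEuclideanCLM (𝕜 := ℝ) A v

/-- Outer product `u vᵀ`. -/
def outer {d : ℕ} (u v : E d) : Mat d := Matrix.of fun i j => u i * v j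

/-- Euclidean dot product. -/
def dot {d : ℕ} (u v : E d) : ℝ := ∑ i, u i * v i

/-- `σ(x) = (M/μ^{3/2})·‖H_*^{1/2}(x − x_*)‖`. -/
def sig {d : ℕ} (M μ : ℝ) (sqH : Mat d) (xs x : E d) : ℝ :=
  M / μ ^ ((3:ℝ)/2) * ‖mApp sqH (x - xs)‖

/-- `τ = max{σ(x), σ(x')}`. -/
def tauP {d : ℕ} (M μ : ℝ) (sqH : Mat d) (xs x x' : E d) : ℝ :=
  max (sig M μ sqH xs x) (sig M μ sqH xs x')

/-- The BFGS update of the inverse Hessian approximation. -/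
def bfgsUpdate {d : ℕ} (H : Mat d) (s y : E d) : Mat d :=
  (1 - (dot y s)⁻¹ • outer s y) * H * (1 - (dot s y)⁻¹ • outer y s)
    + (dot y s)⁻¹ • outer s s

/-!
In the coordinates `Ĥ = H_*^{1/2} H H_*^{1/2}`, `ŝ = H_*^{1/2} s`, `ŷ = H_*^{-1/2} y` the BFGS
update keeps its form, and the mean value inequality together with the Lipschitz bound on the
Hessian gives the secant estimate `‖ŷ - ŝ‖ ≤ τ ‖ŝ‖`. Let `P` be the orthogonal projector onto `ŷ`,
`z = ŝ / ⟪ŷ, ŝ⟫ - ŷ / ‖ŷ‖²` and `w = (I - P) Ĥ ŷ`. Then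
`Ĥ₊ - I = (I - P)(Ĥ - I)(I - P) - (w zᵀ + z wᵀ - ⟪ŷ, Ĥ ŷ⟫ z zᵀ) + (ŝ ŝᵀ / ⟪ŷ, ŝ⟫ - P)`.
Compressing by `I - P` removes `‖(Ĥ - I) ŷ‖² / ‖ŷ‖²` from the squared Frobenius norm, which
together with `‖Ĥ - I‖_F ≤ δ` gives the decrease term. The other two terms are bounded by
multiples of `‖ŷ‖ ‖z‖ ≤ τ / (1 - τ)`.
-/

open scoped RealInnerProductSpace

section

variable {d : ℕ}

theorem dot_eq_inner (u v : E d) : dot u v = ⟪u, v⟫ := by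
  simp [dot, PiLp.inner_apply, mul_comm]

theorem mApp_mul (A B : Mat d) (v : E d) : mApp (A * B) v = mApp A (mApp B v) := by
  simp [mApp]

theorem mApp_sub (A B : Mat d) (v : E d) : mApp (A - B) v = mApp A v - mApp B v := by
  simp [mApp]

theorem mApp_one (v : E d) : mApp 1 v = v := by
  simp [mApp]

theorem mApp_smul (r : ℝ) (A : Mat d) (v : E d) : mApp (r • A) v = r • mApp A v := by
  simp [mApp]

theorem norm_mApp_le (A : Mat d) (v : E d) : ‖mApp A v‖ ≤ spec A * ‖v‖ :=
  (toEuclideanCLM (𝕜 := ℝ) A).le_opNorm v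

theorem spec_nonneg (A : Mat d) : 0 ≤ spec A := norm_nonneg _

theorem spec_mul_le (A B : Mat d) : spec (A * B) ≤ spec A * spec B := by
  simpa only [spec, map_mul] using norm_mul_le _ _

theorem inner_mApp_left (A : Mat d) (u v : E d) : ⟪mApp A u, v⟫ = ⟪u, mApp Aᵀ v⟫ := by
  simp [mApp, EuclideanSpace.inner_eq_star_dotProduct, dotProduct_mulVec, vecMul_transpose,
    dotProduct_comm]

theorem mApp_outer (a b v : E d) : mApp (outer a b) v = ⟪b, v⟫ • a := by
  ext i
  simp [mApp, outer, mulVec, dotProduct, PiLp.inner_apply, Finset.sum_mul]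
  exact Finset.sum_congr rfl fun _ _ => by ring

theorem mul_outer (A : Mat d) (u v : E d) : A * outer u v = outer (mApp A u) v := by
  ext i j
  simp [mApp, outer, mulVec, dotProduct, mul_apply, Finset.sum_mul, mul_assoc]

theorem outer_mul (A : Mat d) (u v : E d) : outer u v * A = outer u (mApp Aᵀ v) := by
  ext i j
  simp [mApp, outer, mulVec, dotProduct, mul_apply, Finset.mul_sum]
  exact Finset.sum_congr rfl fun _ _ => by ring

theorem outer_mul_outer (a b c e : E d) : outer a b * outer c e = ⟪b, c⟫ • outer a e := by
  rw [mul_outer, mApp_outer]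
  ext i j
  simp [outer, mul_assoc]

theorem outer_transpose (u v : E d) : (outer u v)ᵀ = outer v u := by
  ext i j
  simp [outer, mul_comm]

theorem outer_smul_left (r : ℝ) (u v : E d) : outer (r • u) v = r • outer u v := by
  ext i j
  simp [outer, mul_assoc]

theorem outer_smul_right (r : ℝ) (u v : E d) : outer u (r • v) = r • outer u v := by
  ext i j
  simp [outer, mul_left_comm]

theorem outer_sub_left (u v w : E d) : outer (u - v) w = outer u w - outer v w := by
  ext i j
  simp [outer, sub_mul]

theorem outer_sub_right (u v w : E d) : outer u (v - w) = outer u v - outer u w := by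
  ext i j
  simp [outer, mul_sub]

theorem norm_sub_proj_le (y v : E d) : ‖v - (⟪y, v⟫ / ‖y‖ ^ 2) • y‖ ≤ ‖v‖ := by
  have h := (ℝ ∙ y)ᗮ.norm_starProjection_apply_le v
  rwa [Submodule.starProjection_orthogonal_val, Submodule.starProjection_singleton] at h

def frobVec : Mat d →ₗ[ℝ] EuclideanSpace ℝ (Fin d × Fin d) where
  toFun A := WithLp.toLp 2 fun p => A p.1 p.2
  map_add' _ _ := rfl
  map_smul' _ _ := rfl

theorem frobVec_apply (A : Mat d) (p : Fin d × Fin d) : frobVec A p = A p.1 p.2 := rfl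

theorem frob_eq_norm_frobVec (A : Mat d) : frob A = ‖frobVec A‖ := by
  simp [frob, frobVec_apply, EuclideanSpace.norm_eq, Fintype.sum_prod_type]

theorem inner_frobVec_outer (B : Mat d) (a b : E d) :
    ⟪frobVec B, frobVec (outer a b)⟫ = ⟪a, mApp B b⟫ := by
  simp [frobVec_apply, outer, mApp, PiLp.inner_apply, Fintype.sum_prod_type, mulVec, dotProduct,
    Finset.sum_mul]
  exact Finset.sum_congr rfl fun _ _ => Finset.sum_congr rfl fun _ _ => by ring

theorem inner_frobVec_outer_outer (a b c e : E d) :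
    ⟪frobVec (outer a b), frobVec (outer c e)⟫ = ⟪a, c⟫ * ⟪b, e⟫ := by
  rw [inner_frobVec_outer, mApp_outer, inner_smul_right, real_inner_comm a c, mul_comm]

theorem frob_nonneg (A : Mat d) : 0 ≤ frob A := Real.sqrt_nonneg _

theorem frob_outer (a b : E d) : frob (outer a b) = ‖a‖ * ‖b‖ := by
  rw [frob_eq_norm_frobVec, norm_eq_sqrt_real_inner, inner_frobVec_outer_outer,
    real_inner_self_eq_norm_sq, real_inner_self_eq_norm_sq, ← mul_pow,
    Real.sqrt_sq (by positivity)]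

theorem frob_add_le (A B : Mat d) : frob (A + B) ≤ frob A + frob B := by
  simpa only [frob_eq_norm_frobVec, map_add] using norm_add_le _ _

theorem frob_sub_le (A B : Mat d) : frob (A - B) ≤ frob A + frob B := by
  simpa only [frob_eq_norm_frobVec, map_sub] using norm_sub_le _ _

theorem frob_smul (r : ℝ) (A : Mat d) : frob (r • A) = |r| * frob A := by
  rw [frob_eq_norm_frobVec, frob_eq_norm_frobVec, map_smul, norm_smul, Real.norm_eq_abs]

def spanProj (y : E d) : Mat d := (‖y‖ ^ 2)⁻¹ • outer y y

theorem spanProj_transpose (y : E d) : (spanProj y)ᵀ = spanProj y := by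
  rw [spanProj, transpose_smul, outer_transpose]

theorem spanProj_mul_self (y : E d) : spanProj y * spanProj y = spanProj y := by
  rcases eq_or_ne y 0 with rfl | hy
  · simp [spanProj]
  · have hn : ‖y‖ ^ 2 ≠ 0 := by positivity
    rw [spanProj, smul_mul_smul_comm, outer_mul_outer, real_inner_self_eq_norm_sq, smul_smul]
    congr 1
    field_simp

theorem mApp_one_sub_spanProj (y v : E d) :
    mApp (1 - spanProj y) v = v - (⟪y, v⟫ / ‖y‖ ^ 2) • y := by
  rw [mApp_sub, mApp_one, spanProj, mApp_smul, mApp_outer, smul_smul, div_eq_inv_mul]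

theorem norm_mApp_one_sub_spanProj_le (y v : E d) : ‖mApp (1 - spanProj y) v‖ ≤ ‖v‖ := by
  rw [mApp_one_sub_spanProj]
  exact norm_sub_proj_le y v

theorem frob_sq_one_sub_spanProj_conj_le {B : Mat d} (hB : Bᵀ = B) {y : E d} (hy : y ≠ 0) :
    frob ((1 - spanProj y) * B * (1 - spanProj y)) ^ 2 ≤
      frob B ^ 2 - ‖mApp B y‖ ^ 2 / ‖y‖ ^ 2 := by
  set n := ‖y‖ ^ 2 with hn
  set w := mApp B y with hw
  have hn0 : 0 < n := by positivity
  have hconj : (1 - spanProj y) * B * (1 - spanProj y) =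
      B - (n⁻¹ • outer y w + n⁻¹ • outer w y - (n⁻¹ * n⁻¹ * ⟪w, y⟫) • outer y y) := by
    have hPB : spanProj y * B = n⁻¹ • outer y w := by
      rw [spanProj, smul_mul, outer_mul, hB]
    have hBP : B * spanProj y = n⁻¹ • outer w y := by
      rw [spanProj, Matrix.mul_smul, mul_outer]
    have hPBP : spanProj y * B * spanProj y = (n⁻¹ * n⁻¹ * ⟪w, y⟫) • outer y y := by
      rw [hPB, spanProj, smul_mul_smul_comm, outer_mul_outer, smul_smul]
    have hexpand : (1 - spanProj y) * B * (1 - spanProj y) =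
        B - spanProj y * B - B * spanProj y + spanProj y * B * spanProj y := by noncomm_ring
    rw [hexpand, hPBP, hPB, hBP]
    abel
  have hwy : ⟪y, mApp B w⟫ = ‖w‖ ^ 2 := by
    rw [hw, ← real_inner_self_eq_norm_sq, inner_mApp_left, hB]
  have hcs : ⟪y, w⟫ ^ 2 ≤ n * ‖w‖ ^ 2 := by
    rw [hn, ← mul_pow, ← sq_abs]
    exact pow_le_pow_left₀ (abs_nonneg _) (abs_real_inner_le_norm y w) 2
  rw [hconj, frob_eq_norm_frobVec, frob_eq_norm_frobVec, map_sub, norm_sub_sq_real,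
    ← real_inner_self_eq_norm_sq (frobVec (_ - _))]
  simp only [map_add, map_sub, map_smul, inner_add_left, inner_add_right, inner_sub_left,
    inner_sub_right, real_inner_smul_left, real_inner_smul_right, inner_frobVec_outer,
    mApp_outer, hwy]
  rw [← hw, real_inner_comm y w, real_inner_self_eq_norm_sq, real_inner_self_eq_norm_sq, ← hn]
  field_simp
  nlinarith [hcs]

theorem le_sub_div_of_sq_le_sq_sub {a b δ x : ℝ} (hδ : 0 < δ) (ha : 0 ≤ a) (hb : 0 ≤ b)
    (haδ : a ≤ δ) (h : x ^ 2 ≤ a ^ 2 - b) : x ≤ a - b / (2 * δ) := by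
  have hba : b / (2 * δ) ≤ a / 2 := by
    rw [div_le_div_iff₀ (by positivity) two_pos]
    nlinarith
  have hab : a * (b / δ) ≤ b := by
    rw [mul_div_assoc', div_le_iff₀ hδ]
    nlinarith
  have hsq : a ^ 2 - b ≤ (a - b / (2 * δ)) ^ 2 := by
    rw [show b / (2 * δ) = b / δ / 2 by ring]
    nlinarith [sq_nonneg (b / δ)]
  nlinarith

theorem frob_one_sub_spanProj_conj_le {B : Mat d} (hB : Bᵀ = B) {y : E d} (hy : y ≠ 0)
    {δ : ℝ} (hδ : 0 < δ) (hBδ : frob B ≤ δ) :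
    frob ((1 - spanProj y) * B * (1 - spanProj y)) ≤
      frob B - ‖mApp B y‖ ^ 2 / (2 * δ * ‖y‖ ^ 2) := by
  rw [mul_comm (2 * δ), ← div_div]
  exact le_sub_div_of_sq_le_sq_sub hδ (frob_nonneg _) (by positivity) hBδ
    (frob_sq_one_sub_spanProj_conj_le hB hy)

/-- The vector `z` with `1 - ⟪y, s⟫⁻¹ • s yᵀ = (1 - spanProj y) - z yᵀ`. -/
def secantDefect (s y : E d) : E d := ⟪y, s⟫⁻¹ • s - (‖y‖ ^ 2)⁻¹ • y

theorem bfgsUpdate_sub_one_eq {H : Mat d} (hH : Hᵀ = H) (s y : E d) :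
    bfgsUpdate H s y - 1 =
      (1 - spanProj y) * (H - 1) * (1 - spanProj y)
      - (outer (mApp ((1 - spanProj y) * H) y) (secantDefect s y)
          + outer (secantDefect s y) (mApp ((1 - spanProj y) * H) y)
          - ⟪y, mApp H y⟫ • outer (secantDefect s y) (secantDefect s y))
      + (⟪y, s⟫⁻¹ • outer s s - spanProj y) := by
  have hl : 1 - (dot y s)⁻¹ • outer s y = (1 - spanProj y) - outer (secantDefect s y) y := by
    rw [dot_eq_inner, secantDefect, outer_sub_left, outer_smul_left, outer_smul_left, spanProj]
    abel
  have hr : 1 - (dot s y)⁻¹ • outer y s = (1 - spanProj y) - outer y (secantDefect s y) := by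
    rw [dot_eq_inner, real_inner_comm, secantDefect, outer_sub_right, outer_smul_right,
      outer_smul_right, spanProj]
    abel
  rw [bfgsUpdate, hl, hr, dot_eq_inner]
  have hPT : (spanProj y)ᵀ = spanProj y := spanProj_transpose y
  have hPP : spanProj y * spanProj y = spanProj y := spanProj_mul_self y
  set P := spanProj y
  set z := secantDefect s y
  set w := mApp ((1 - P) * H) y
  have hQH : (1 - P) * H * outer y z = outer w z := mul_outer _ _ _
  have hHQ : outer z y * H * (1 - P) = outer z w := by
    rw [mul_assoc, outer_mul, transpose_mul, transpose_sub, transpose_one, hPT, hH]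
  have hHH : outer z y * H * outer y z = ⟪y, mApp H y⟫ • outer z z := by
    rw [outer_mul, hH, outer_mul_outer, real_inner_comm]
  calc ((1 - P) - outer z y) * H * ((1 - P) - outer y z) + ⟪y, s⟫⁻¹ • outer s s - 1
      = (1 - P) * H * (1 - P) - (1 - P) * H * outer y z - outer z y * H * (1 - P)
          + outer z y * H * outer y z + ⟪y, s⟫⁻¹ • outer s s - 1 := by noncomm_ring
    _ = (1 - P) * (H - 1) * (1 - P) + (P * P - P)
          - (outer w z + outer z w - ⟪y, mApp H y⟫ • outer z z)
          + (⟪y, s⟫⁻¹ • outer s s - P) := by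
        rw [hQH, hHQ, hHH]
        noncomm_ring
    _ = _ := by rw [hPP, sub_self, add_zero]

theorem mul_bfgsUpdate_mul {A : Mat d} (hA : Aᵀ = A) (hdet : IsUnit A.det) (H : Mat d)
    (s y : E d) :
    A * bfgsUpdate H s y * A = bfgsUpdate (A * H * A) (mApp A s) (mApp A⁻¹ y) := by
  have hy : mApp A (mApp A⁻¹ y) = y := by rw [← mApp_mul, mul_nonsing_inv A hdet, mApp_one]
  have hys : ⟪mApp A⁻¹ y, mApp A s⟫ = ⟪y, s⟫ := by
    rw [inner_mApp_left, transpose_nonsing_inv, hA, ← mApp_mul, nonsing_inv_mul A hdet, mApp_one]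
  have hsy : ⟪mApp A s, mApp A⁻¹ y⟫ = ⟪s, y⟫ := by
    rw [real_inner_comm, hys, real_inner_comm]
  have hl : A * (1 - ⟪y, s⟫⁻¹ • outer s y) =
      (1 - ⟪y, s⟫⁻¹ • outer (mApp A s) (mApp A⁻¹ y)) * A := by
    rw [mul_sub, sub_mul, mul_one, one_mul, Matrix.mul_smul, Matrix.smul_mul, mul_outer,
      outer_mul, hA, hy]
  have hr : (1 - ⟪s, y⟫⁻¹ • outer y s) * A =
      A * (1 - ⟪s, y⟫⁻¹ • outer (mApp A⁻¹ y) (mApp A s)) := by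
    rw [mul_sub, sub_mul, mul_one, one_mul, Matrix.mul_smul, Matrix.smul_mul, mul_outer,
      outer_mul, hA, hy]
  have hss : A * outer s s * A = outer (mApp A s) (mApp A s) := by
    rw [mul_outer, outer_mul, hA]
  simp only [bfgsUpdate, dot_eq_inner, hys, hsy]
  calc A * ((1 - ⟪y, s⟫⁻¹ • outer s y) * H * (1 - ⟪s, y⟫⁻¹ • outer y s)
          + ⟪y, s⟫⁻¹ • outer s s) * A
      = A * (1 - ⟪y, s⟫⁻¹ • outer s y) * H * ((1 - ⟪s, y⟫⁻¹ • outer y s) * A)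
          + ⟪y, s⟫⁻¹ • (A * outer s s * A) := by
        simp only [Matrix.mul_add, Matrix.add_mul, Matrix.mul_smul, Matrix.smul_mul, mul_assoc]
    _ = _ := by
        rw [hl, hr, hss]
        simp only [mul_assoc]

theorem frob_bfgsCross_le (H : Mat d) (y z : E d) :
    frob (outer (mApp ((1 - spanProj y) * H) y) z + outer z (mApp ((1 - spanProj y) * H) y)
        - ⟪y, mApp H y⟫ • outer z z) ≤
      2 * spec H * (‖y‖ * ‖z‖) + spec H * (‖y‖ * ‖z‖) ^ 2 := by
  have hw : ‖mApp ((1 - spanProj y) * H) y‖ ≤ spec H * ‖y‖ := by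
    rw [mApp_mul]
    exact (norm_mApp_one_sub_spanProj_le _ _).trans (norm_mApp_le _ _)
  have hyHy : |⟪y, mApp H y⟫| ≤ spec H * ‖y‖ ^ 2 := by
    calc |⟪y, mApp H y⟫| ≤ ‖y‖ * (spec H * ‖y‖) :=
          (abs_real_inner_le_norm _ _).trans (by gcongr; exact norm_mApp_le _ _)
      _ = spec H * ‖y‖ ^ 2 := by ring
  calc _ ≤ frob (outer (mApp ((1 - spanProj y) * H) y) z)
          + frob (outer z (mApp ((1 - spanProj y) * H) y)) + frob (⟪y, mApp H y⟫ • outer z z) :=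
        (frob_sub_le _ _).trans (by gcongr; exact frob_add_le _ _)
    _ ≤ spec H * ‖y‖ * ‖z‖ + ‖z‖ * (spec H * ‖y‖) + spec H * ‖y‖ ^ 2 * (‖z‖ * ‖z‖) := by
        rw [frob_outer, frob_outer, frob_smul, frob_outer]
        gcongr
    _ = _ := by ring

-- `‖y‖² ‖z‖² = (‖y‖² ‖s‖² - ⟪y, s⟫²) / ⟪y, s⟫²`, and the numerator equals
-- `‖s‖² ‖y - s‖² - ⟪y - s, s⟫²`.
theorem norm_mul_norm_secantDefect_le {s y : E d} (hc : 0 < ⟪y, s⟫) :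
    ‖y‖ * ‖secantDefect s y‖ ≤ ‖s‖ * ‖y - s‖ / ⟪y, s⟫ := by
  have hy : y ≠ 0 := by rintro rfl; simp at hc
  have hn : 0 < ‖y‖ ^ 2 := by positivity
  have hz : ‖secantDefect s y‖ ^ 2 = ‖s‖ ^ 2 / ⟪y, s⟫ ^ 2 - 1 / ‖y‖ ^ 2 := by
    rw [secantDefect, norm_sub_sq_real, norm_smul, norm_smul, real_inner_smul_left,
      real_inner_smul_right, real_inner_comm y s, Real.norm_eq_abs, Real.norm_eq_abs,
      abs_inv, abs_inv, abs_of_pos hc, abs_of_pos hn]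
    field_simp
    ring
  rw [← pow_le_pow_iff_left₀ (by positivity) (by positivity) two_ne_zero, mul_pow, hz, div_pow,
    mul_pow, norm_sub_sq_real y s]
  calc ‖y‖ ^ 2 * (‖s‖ ^ 2 / ⟪y, s⟫ ^ 2 - 1 / ‖y‖ ^ 2)
      = (‖y‖ ^ 2 * ‖s‖ ^ 2 - ⟪y, s⟫ ^ 2) / ⟪y, s⟫ ^ 2 := by field_simp
    _ ≤ _ := by gcongr; nlinarith [sq_nonneg (‖s‖ ^ 2 - ⟪y, s⟫)]

theorem one_sub_mul_norm_sq_le_inner {s y : E d} {τ : ℝ} (h : ‖y - s‖ ≤ τ * ‖s‖) :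
    (1 - τ) * ‖s‖ ^ 2 ≤ ⟪y, s⟫ := by
  have hsplit : ⟪y, s⟫ = ‖s‖ ^ 2 + ⟪y - s, s⟫ := by
    rw [inner_sub_left, real_inner_self_eq_norm_sq]
    ring
  have := neg_abs_le ⟪y - s, s⟫
  have := abs_real_inner_le_norm (y - s) s
  nlinarith [norm_nonneg s]

theorem frob_smul_outer_sub_spanProj_le {s y : E d} (hc : 0 < ⟪y, s⟫) :
    frob (⟪y, s⟫⁻¹ • outer s s - spanProj y) ≤
      ‖s‖ * ‖y - s‖ / ⟪y, s⟫ + ‖y‖ * ‖secantDefect s y‖ := by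
  have hsplit : ⟪y, s⟫⁻¹ • outer s s - spanProj y =
      ⟪y, s⟫⁻¹ • outer (s - y) s + outer y (secantDefect s y) := by
    rw [secantDefect, outer_sub_left, outer_sub_right, outer_smul_right, outer_smul_right,
      spanProj, smul_sub]
    abel
  rw [hsplit]
  refine (frob_add_le _ _).trans (le_of_eq ?_)
  rw [frob_smul, frob_outer, frob_outer, abs_inv, abs_of_pos hc, norm_sub_rev]
  ring

theorem frob_bfgsUpdate_sub_one_le {H : Mat d} (hH : Hᵀ = H) {s y : E d} (hs : s ≠ 0)
    {τ δ : ℝ} (hτ : τ < 1) (hys : ‖y - s‖ ≤ τ * ‖s‖) (hδ : 0 < δ) (hHδ : frob (H - 1) ≤ δ) :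
    frob (bfgsUpdate H s y - 1) ≤
      frob (H - 1) - ‖mApp (H - 1) y‖ ^ 2 / (2 * δ * ‖y‖ ^ 2)
        + 2 * (spec H + 1) * (τ / (1 - τ)) + spec H * (τ / (1 - τ)) ^ 2 := by
  have hc : (1 - τ) * ‖s‖ ^ 2 ≤ ⟪y, s⟫ := one_sub_mul_norm_sq_le_inner hys
  have hc0 : 0 < ⟪y, s⟫ := lt_of_lt_of_le (mul_pos (by linarith) (by positivity)) hc
  have hy : y ≠ 0 := by rintro rfl; simp at hc0
  have hτ0 : 0 ≤ τ := nonneg_of_mul_nonneg_left ((norm_nonneg _).trans hys) (norm_pos_iff.mpr hs)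
  have hratio : ‖s‖ * ‖y - s‖ / ⟪y, s⟫ ≤ τ / (1 - τ) := by
    rw [div_le_div_iff₀ hc0 (by linarith)]
    nlinarith [mul_le_mul_of_nonneg_left hys (norm_nonneg s), mul_le_mul_of_nonneg_left hc hτ0]
  have hdefect := (norm_mul_norm_secantDefect_le hc0).trans hratio
  have hQBQ := frob_one_sub_spanProj_conj_le (by rw [transpose_sub, transpose_one, hH]) hy hδ hHδ
  have hcross := frob_bfgsCross_le H y (secantDefect s y)
  have hrank := frob_smul_outer_sub_spanProj_le hc0
  have hsq : spec H * (‖y‖ * ‖secantDefect s y‖) ^ 2 ≤ spec H * (τ / (1 - τ)) ^ 2 := by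
    gcongr
    exact spec_nonneg H
  rw [bfgsUpdate_sub_one_eq hH]
  refine (frob_add_le _ _).trans ((add_le_add_left (frob_sub_le _ _) _).trans ?_)
  nlinarith [mul_le_mul_of_nonneg_left hdefect (spec_nonneg H)]

theorem rpow_three_halves_eq_mul_sqrt {μ : ℝ} (hμ : 0 ≤ μ) : μ ^ ((3 : ℝ) / 2) = μ * √μ := by
  rw [show (3 : ℝ) / 2 = 1 + 1 / 2 by norm_num, Real.rpow_add' hμ (by norm_num), Real.rpow_one,
    Real.sqrt_eq_rpow]

theorem spec_inv_le {A : Mat d} (hdet : IsUnit A.det) {c : ℝ} (hc : 0 < c)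
    (hlow : ∀ v, c * ‖v‖ ≤ ‖mApp A v‖) : spec A⁻¹ ≤ c⁻¹ := by
  refine ContinuousLinearMap.opNorm_le_bound _ (inv_nonneg.mpr hc.le) fun v => ?_
  have h := hlow (mApp A⁻¹ v)
  rw [← mApp_mul, mul_nonsing_inv A hdet, mApp_one] at h
  rw [inv_mul_eq_div, le_div_iff₀ hc, mul_comm]
  exact h

theorem sqrt_mul_norm_le_norm_mApp {A K : Mat d} (hA : Aᵀ = A) (hAK : A * A = K) {μ : ℝ}
    (hK : ∀ v, μ * ‖v‖ ^ 2 ≤ dot v (mApp K v)) (v : E d) : √μ * ‖v‖ ≤ ‖mApp A v‖ := by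
  have hsq : dot v (mApp K v) = ‖mApp A v‖ ^ 2 := by
    have h := inner_mApp_left A v (mApp A v)
    rw [hA] at h
    rw [dot_eq_inner, ← hAK, mApp_mul, ← h, real_inner_self_eq_norm_sq]
  calc √μ * ‖v‖ = √(μ * ‖v‖ ^ 2) := by
        rw [Real.sqrt_mul' _ (sq_nonneg _), Real.sqrt_sq (norm_nonneg _)]
    _ ≤ √(‖mApp A v‖ ^ 2) := Real.sqrt_le_sqrt (hsq ▸ hK v)
    _ = ‖mApp A v‖ := Real.sqrt_sq (norm_nonneg _)

theorem convex_setOf_norm_mApp_sub_le (A : Mat d) (xs : E d) (r : ℝ) :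
    Convex ℝ {z | ‖mApp A (z - xs)‖ ≤ r} := by
  intro a ha b hb p q hp hq hpq
  have hcomb : p • a + q • b - xs = p • (a - xs) + q • (b - xs) := by
    rw [smul_sub, smul_sub, sub_add_sub_comm, ← add_smul, hpq, one_smul]
  calc ‖mApp A (p • a + q • b - xs)‖
      = ‖p • mApp A (a - xs) + q • mApp A (b - xs)‖ := by
        rw [hcomb]
        simp only [mApp, map_add, map_smul]
    _ ≤ p * r + q * r := by
        refine (norm_add_le _ _).trans ?_
        rw [norm_smul, norm_smul, Real.norm_of_nonneg hp, Real.norm_of_nonneg hq]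
        exact add_le_add (mul_le_mul_of_nonneg_left ha hp) (mul_le_mul_of_nonneg_left hb hq)
    _ = r := by rw [← add_mul, hpq, one_mul]

-- Mean value inequality for `A⁻¹ ∘ g` on the convex set `{z | ‖A (z - xs)‖ ≤ r}` through `x`
-- and `x'`, on which the derivative `A⁻¹ ∇²f(z)` stays within `M r / μ` of `A = A⁻¹ ∇²f(xs)`.
theorem norm_secant_sub_le_tauP (g : E d → E d) (Hess : E d → Mat d) {xs : E d} {μ M : ℝ}
    (hμ : 0 < μ) (hM : 0 ≤ M)
    (hHd : ∀ x, HasFDerivAt g (toEuclideanCLM (𝕜 := ℝ) (Hess x)) x)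
    (hLip : ∀ x, spec (Hess x - Hess xs) ≤ M * ‖x - xs‖)
    {A : Mat d} (hdet : IsUnit A.det) (hA2 : A * A = Hess xs)
    (hlow : ∀ v, √μ * ‖v‖ ≤ ‖mApp A v‖) (x x' : E d) :
    ‖mApp A⁻¹ (g x' - g x) - mApp A (x' - x)‖ ≤ tauP M μ A xs x x' * ‖mApp A (x' - x)‖ := by
  have hsμ : 0 < √μ := Real.sqrt_pos.mpr hμ
  have hnorm : ∀ v, ‖v‖ ≤ ‖mApp A v‖ / √μ := fun v => by
    rw [le_div_iff₀ hsμ, mul_comm]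
    exact hlow v
  set r := max ‖mApp A (x - xs)‖ ‖mApp A (x' - xs)‖
  have hderiv : ∀ z, HasFDerivAt (fun z => mApp A⁻¹ (g z))
      ((toEuclideanCLM (𝕜 := ℝ) A⁻¹).comp (toEuclideanCLM (𝕜 := ℝ) (Hess z))) z :=
    fun z => (toEuclideanCLM (𝕜 := ℝ) A⁻¹).hasFDerivAt.comp z (hHd z)
  have hbound : ∀ z ∈ {z | ‖mApp A (z - xs)‖ ≤ r},
      ‖(toEuclideanCLM (𝕜 := ℝ) A⁻¹).comp (toEuclideanCLM (𝕜 := ℝ) (Hess z))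
        - toEuclideanCLM (𝕜 := ℝ) A‖ ≤ M * r / μ := by
    intro z hz
    have hA : A = A⁻¹ * Hess xs := by rw [← hA2, ← mul_assoc, nonsing_inv_mul A hdet, one_mul]
    have hdiff : (toEuclideanCLM (𝕜 := ℝ) A⁻¹).comp (toEuclideanCLM (𝕜 := ℝ) (Hess z))
        - toEuclideanCLM (𝕜 := ℝ) A = toEuclideanCLM (𝕜 := ℝ) (A⁻¹ * (Hess z - Hess xs)) := by
      rw [mul_sub, map_sub, ← hA, map_mul]
      rfl
    rw [hdiff]
    calc spec (A⁻¹ * (Hess z - Hess xs)) ≤ spec A⁻¹ * spec (Hess z - Hess xs) := spec_mul_le _ _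
      _ ≤ (√μ)⁻¹ * (M * (r / √μ)) := by
        gcongr
        · exact spec_nonneg _
        · exact spec_inv_le hdet hsμ hlow
        · exact (hLip z).trans (by gcongr; exact (hnorm _).trans (by gcongr; exact hz))
      _ = M * r / μ := by
        field_simp
        rw [Real.sq_sqrt hμ.le]
        ring
  have hmvt := (convex_setOf_norm_mApp_sub_le A xs r).norm_image_sub_le_of_norm_hasFDerivWithin_le'
    (fun z _ => (hderiv z).hasFDerivWithinAt) hbound
    (le_max_left _ _ : ‖mApp A (x - xs)‖ ≤ r) (le_max_right _ _ : ‖mApp A (x' - xs)‖ ≤ r)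
  have htau : tauP M μ A xs x x' = M / μ ^ ((3 : ℝ) / 2) * r :=
    (mul_max_of_nonneg _ _ (by positivity)).symm
  calc ‖mApp A⁻¹ (g x' - g x) - mApp A (x' - x)‖
      = ‖mApp A⁻¹ (g x') - mApp A⁻¹ (g x) - toEuclideanCLM (𝕜 := ℝ) A (x' - x)‖ := by
        simp only [mApp, map_sub]
    _ ≤ M * r / μ * ‖x' - x‖ := hmvt
    _ ≤ M * r / μ * (‖mApp A (x' - x)‖ / √μ) := by gcongr; exact hnorm _
    _ = tauP M μ A xs x x' * ‖mApp A (x' - x)‖ := by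
        rw [htau, rpow_three_halves_eq_mul_sqrt hμ.le]
        field_simp

theorem bfgs_error_le {S τ : ℝ} (hS : 0 ≤ S) (hτ0 : 0 ≤ τ) (hτ1 : τ < 1) :
    2 * (S + 1) * (τ / (1 - τ)) + S * (τ / (1 - τ)) ^ 2 ≤
      (S * (4 / (1 - τ)) + S * (4 * (1 + τ) ^ 2 * τ / (1 - τ) ^ 2) + (3 + 2 * τ) / (1 - τ))
        * τ := by
  have hρ : 0 ≤ τ / (1 - τ) := div_nonneg hτ0 (by linarith)
  have hrhs : (S * (4 / (1 - τ)) + S * (4 * (1 + τ) ^ 2 * τ / (1 - τ) ^ 2)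
      + (3 + 2 * τ) / (1 - τ)) * τ =
      4 * S * (τ / (1 - τ)) + 4 * S * (1 + τ) ^ 2 * (τ / (1 - τ)) ^ 2
        + (3 + 2 * τ) * (τ / (1 - τ)) := by
    have : 1 - τ ≠ 0 := by linarith
    field_simp
  rw [hrhs]
  nlinarith [mul_nonneg hS hρ, mul_nonneg hS (sq_nonneg (τ / (1 - τ))),
    mul_nonneg (mul_nonneg hS (sq_nonneg (τ / (1 - τ))))
      (by nlinarith : (0 : ℝ) ≤ 4 * (1 + τ) ^ 2 - 1)]

end

theorem bfgs_potential_decrease_general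
    {d : ℕ}
    (g : E d → E d) (Hess : E d → Mat d) (xs : E d)
    (μ M : ℝ) (hμ : 0 < μ) (hM : 0 < M)
    -- `g` is the gradient of `f`, and `Hess` its Hessian (so `f` is twice differentiable)
    (hHd : ∀ x, HasFDerivAt g (Matrix.toEuclideanCLM (𝕜 := ℝ) (Hess x)) x)
    -- Assumption 1: strong convexity and gradient Lipschitz continuity
    (hHl : ∀ x v, μ * ‖v‖ ^ 2 ≤ dot v (mApp (Hess x) v))
    -- Assumption 2: Hessian Lipschitz continuity toward the optimum
    (hLip : ∀ x, spec (Hess x - Hess xs) ≤ M * ‖x - xs‖)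
    -- `sqH` is the positive definite square root `H_*^{1/2}` of `H_* = ∇²f(x_*)`
    (sqH : Mat d) (hsqH : sqH.PosDef) (hsqH2 : sqH * sqH = Hess xs)
    (δ : ℝ) (hδ : 0 < δ)
    -- one step of the BFGS method: current iterate `xk`, inverse Hessian approximation `Hk`
    (xk xk1 : E d) (Hk : Mat d) (hHkpd : Hk.PosDef)
    (hs : xk1 - xk ≠ 0)
    (hτ : tauP M μ sqH xs xk xk1 < 1)
    (hH : frob (sqH * Hk * sqH - 1) ≤ δ) :
    frob (sqH * bfgsUpdate Hk (xk1 - xk) (g xk1 - g xk) * sqH - 1) ≤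
      frob (sqH * Hk * sqH - 1)
        - ‖mApp (sqH * Hk * sqH - 1) (mApp sqH⁻¹ (g xk1 - g xk))‖ ^ 2
            / (2 * δ * ‖mApp sqH⁻¹ (g xk1 - g xk)‖ ^ 2)
        + (spec (sqH * Hk * sqH) * (4 / (1 - tauP M μ sqH xs xk xk1))
            + spec (sqH * Hk * sqH) *
                (4 * (1 + tauP M μ sqH xs xk xk1) ^ 2 * tauP M μ sqH xs xk xk1
                  / (1 - tauP M μ sqH xs xk xk1) ^ 2)
            + (3 + 2 * tauP M μ sqH xs xk xk1) / (1 - tauP M μ sqH xs xk xk1))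
          * tauP M μ sqH xs xk xk1 := by
  have hA : sqHᵀ = sqH := by
    simpa [conjTranspose_eq_transpose_of_trivial] using hsqH.isHermitian.eq
  have hHk : Hkᵀ = Hk := by
    simpa [conjTranspose_eq_transpose_of_trivial] using hHkpd.isHermitian.eq
  have hdet : IsUnit sqH.det := (isUnit_iff_isUnit_det sqH).mp hsqH.isUnit
  have hlow := sqrt_mul_norm_le_norm_mApp hA hsqH2 (hHl xs)
  have hŝ : mApp sqH (xk1 - xk) ≠ 0 := fun h0 => hs <| norm_eq_zero.mp <| le_antisymm
    (nonpos_of_mul_nonpos_right (by simpa [h0] using hlow (xk1 - xk)) (Real.sqrt_pos.mpr hμ))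
    (norm_nonneg _)
  have hτ0 : 0 ≤ tauP M μ sqH xs xk xk1 :=
    (mul_nonneg (by positivity) (norm_nonneg _)).trans (le_max_left _ _)
  have hsecant := norm_secant_sub_le_tauP g Hess hμ hM.le hHd hLip hdet hsqH2 hlow xk xk1
  rw [mul_bfgsUpdate_mul hA hdet]
  refine (frob_bfgsUpdate_sub_one_le (by rw [transpose_mul, transpose_mul, hA, hHk, mul_assoc])
    hŝ hτ hsecant hδ hH).trans ?_
  linarith [bfgs_error_le (spec_nonneg (sqH * Hk * sqH)) hτ0 hτ]

theorem bfgs_potential_decrease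
    {d : ℕ}
    (f : E d → ℝ) (g : E d → E d) (Hess : E d → Mat d) (xs : E d)
    (μ L M : ℝ) (hμ : 0 < μ) (hμL : μ ≤ L) (hM : 0 < M)
    -- `g` is the gradient of `f`, and `Hess` its Hessian (so `f` is twice differentiable)
    (hg : ∀ x, HasGradientAt f (g x) x)
    (hHd : ∀ x, HasFDerivAt g (Matrix.toEuclideanCLM (𝕜 := ℝ) (Hess x)) x)
    -- `xs` is the unique minimizer of `f`
    (hmin : ∀ x, f xs ≤ f x)
    (huniq : ∀ x, (∀ y, f x ≤ f y) → x = xs)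
    -- Assumption 1: strong convexity and gradient Lipschitz continuity
    (hgl : ∀ x y, μ * ‖x - y‖ ≤ ‖g x - g y‖)
    (hgu : ∀ x y, ‖g x - g y‖ ≤ L * ‖x - y‖)
    (hHl : ∀ x v, μ * ‖v‖ ^ 2 ≤ dot v (mApp (Hess x) v))
    (hHu : ∀ x v, dot v (mApp (Hess x) v) ≤ L * ‖v‖ ^ 2)
    -- Assumption 2: Hessian Lipschitz continuity toward the optimum
    (hLip : ∀ x, spec (Hess x - Hess xs) ≤ M * ‖x - xs‖)
    -- `sqH` is the positive definite square root `H_*^{1/2}` of `H_* = ∇²f(x_*)`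
    (sqH : Mat d) (hsqH : sqH.PosDef) (hsqH2 : sqH * sqH = Hess xs)
    (δ : ℝ) (hδ : 0 < δ)
    -- one step of the BFGS method: current iterate `xk`, inverse Hessian approximation `Hk`
    (xk xk1 : E d) (Hk : Mat d) (hHkpd : Hk.PosDef)
    (hxk1 : xk1 = xk - mApp Hk (g xk))
    (hs : xk1 - xk ≠ 0)
    (hτ : tauP M μ sqH xs xk xk1 < 1)
    (hH : frob (sqH * Hk * sqH - 1) ≤ δ) :
    frob (sqH * bfgsUpdate Hk (xk1 - xk) (g xk1 - g xk) * sqH - 1) ≤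
      frob (sqH * Hk * sqH - 1)
        - ‖mApp (sqH * Hk * sqH - 1) (mApp sqH⁻¹ (g xk1 - g xk))‖ ^ 2
            / (2 * δ * ‖mApp sqH⁻¹ (g xk1 - g xk)‖ ^ 2)
        + (spec (sqH * Hk * sqH) * (4 / (1 - tauP M μ sqH xs xk xk1))
            + spec (sqH * Hk * sqH) *
                (4 * (1 + tauP M μ sqH xs xk xk1) ^ 2 * tauP M μ sqH xs xk xk1
                  / (1 - tauP M μ sqH xs xk xk1) ^ 2)
            + (3 + 2 * tauP M μ sqH xs xk xk1) / (1 - tauP M μ sqH xs xk xk1))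
          * tauP M μ sqH xs xk xk1 :=
  bfgs_potential_decrease_general g Hess xs μ M hμ hM hHd hHl hLip sqH hsqH hsqH2 δ hδ xk xk1 Hk
    hHkpd hs hτ hH
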